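/- Let N ≥ 1 and 1 ≤ q ≤ p ≤ ∞. There exists a constant C > 0 such that for every measurable function f on ℝ^N with ‖f‖_{L^q_uloc} < ∞ and every t > 0, ‖e^{tΔ}f‖_{L^p_uloc} ≤ C (1 + t^{−(N/2)(1/q − 1/p)}) ‖f‖_{L^q_uloc}. -/

import Mathlib

open MeasureTheory Real Set Metric
open scoped ENNReal NNReal

noncomputable section

/-- Euclidean space ℝ^N. -/
abbrev RN (N : ℕ) := EuclideanSpace ℝ (Fin N)

/-- The Gaussian heat kernel `G(t,x) = (4πt)^{-N/2} exp(-|x|²/(4t))` on ℝ^N. -/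
def heatKernel (N : ℕ) (t : ℝ) (x : RN N) : ℝ :=
  (4 * Real.pi * t) ^ (-(N : ℝ) / 2) * Real.exp (-‖x‖ ^ 2 / (4 * t))

/-- `(e^{tΔ}f)(x) = ∫_{ℝ^N} G(t, x-y) f(y) dy` for a measurable function `f`. -/
def heatConv (N : ℕ) (t : ℝ) (f : RN N → ℝ) (x : RN N) : ℝ :=
  ∫ y, heatKernel N t (x - y) * f y

/-- The uniformly local `L^p` norm: `‖f‖ = sup_z ‖f‖_{L^p(B(z,1))}`. -/
def ulocNorm (N : ℕ) (p : ℝ≥0∞) (f : RN N → ℝ) : ℝ≥0∞ :=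
  ⨆ z : RN N, eLpNorm f p (volume.restrict (ball z 1))

namespace UlocProof

variable {N : ℕ} {t : ℝ}

/-- The heat kernel as an `ℝ≥0∞`-valued function. -/
def Ge (N : ℕ) (t : ℝ) (w : RN N) : ℝ≥0∞ := ENNReal.ofReal (heatKernel N t w)

lemma heatKernel_pos (ht : 0 < t) (x : RN N) : 0 < heatKernel N t x := by
  unfold heatKernel; positivity

lemma measurable_heatKernel (N : ℕ) (t : ℝ) : Measurable (heatKernel N t) := by
  unfold heatKernel
  exact (measurable_const.mul
    (((measurable_norm.pow_const 2).neg.div_const (4*t)).exp))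

lemma measurable_Ge (N : ℕ) (t : ℝ) : Measurable (Ge N t) :=
  (measurable_heatKernel N t).ennreal_ofReal

lemma Ge_ne_zero (ht : 0 < t) (w : RN N) : Ge N t w ≠ 0 :=
  (ENNReal.ofReal_pos.mpr (heatKernel_pos ht w)).ne'

lemma Ge_ne_top (w : RN N) : Ge N t w ≠ ∞ := ENNReal.ofReal_ne_top

lemma integrable_gauss (N : ℕ) {b : ℝ} (hb : 0 < b) :
    Integrable (fun v : RN N => rexp (-b * ‖v‖^2)) := by
  have h := (GaussianFourier.integrable_cexp_neg_mul_sq_norm_add (V := RN N)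
    (b := (b:ℂ)) (by simpa using hb) 0 0).norm
  refine h.congr (Filter.Eventually.of_forall fun v => ?_)
  simp [Complex.norm_exp]
  left; norm_cast

lemma lintegral_gauss {b c : ℝ} (hb : 0 < b) (hc : 0 ≤ c) :
    ∫⁻ w : RN N, ENNReal.ofReal (c * rexp (-b * ‖w‖^2)) =
      ENNReal.ofReal (c * (π/b) ^ ((N:ℝ)/2)) := by
  have hI : Integrable (fun v : RN N => c * rexp (-b*‖v‖^2)) :=
    (integrable_gauss N hb).const_mul c
  rw [← ofReal_integral_eq_lintegral_ofReal hI
    (Filter.Eventually.of_forall fun v => by positivity)]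
  congr 1
  rw [integral_const_mul, GaussianFourier.integral_rexp_neg_mul_sq_norm hb]
  simp

lemma heatKernel_eq (t : ℝ) (x : RN N) :
    heatKernel N t x = (4*π*t) ^ (-(N:ℝ)/2) * rexp (-(1/(4*t)) * ‖x‖^2) := by
  unfold heatKernel
  congr 2
  ring

lemma Ge_total (ht : 0 < t) : ∫⁻ w : RN N, Ge N t w = 1 := by
  have hb : 0 < 1/(4*t) := by positivity
  have h4 : (0:ℝ) < 4*π*t := by positivity
  calc ∫⁻ w : RN N, Ge N t w
      = ∫⁻ w : RN N, ENNReal.ofReal ((4*π*t) ^ (-(N:ℝ)/2) * rexp (-(1/(4*t)) * ‖w‖^2)) := by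
        simp_rw [Ge, heatKernel_eq]
    _ = ENNReal.ofReal ((4*π*t) ^ (-(N:ℝ)/2) * (π/(1/(4*t))) ^ ((N:ℝ)/2)) :=
        lintegral_gauss hb (by positivity)
    _ = 1 := by
        have h1 : π/(1/(4*t)) = 4*π*t := by field_simp
        rw [h1, neg_div, Real.rpow_neg h4.le,
          inv_mul_cancel₀ ((Real.rpow_pos_of_pos h4 _).ne'), ENNReal.ofReal_one]

lemma lintegral_Ge_sub (ht : 0 < t) (x : RN N) :
    ∫⁻ y, Ge N t (x - y) = 1 := by
  have h : ∀ y : RN N, Ge N t (x - y) = Ge N t (y - x) := fun y => by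
    unfold Ge heatKernel; rw [norm_sub_rev]
  simp_rw [h]
  rw [lintegral_sub_right_eq_self (Ge N t) x]
  exact Ge_total ht

lemma heatKernel_le (ht : 0 < t) {R : ℝ} {w : RN N} (hw : R ≤ ‖w‖) :
    heatKernel N t w ≤ (4*π*t) ^ (-(N:ℝ)/2) * rexp (-(max R 0)^2 / (4*t)) := by
  unfold heatKernel
  have h1 : max R 0 ≤ ‖w‖ := max_le hw (norm_nonneg _)
  have h2 : (max R 0)^2 ≤ ‖w‖^2 := by
    apply pow_le_pow_left₀ (le_max_right _ _) h1
  apply mul_le_mul_of_nonneg_left _ (Real.rpow_nonneg (by positivity) _)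
  apply Real.exp_le_exp.mpr
  exact (div_le_div_iff_of_pos_right (by positivity)).mpr (neg_le_neg h2)

lemma vol_ball_lt_top (r : ℝ) : volume (ball (0:RN N) r) < ∞ := measure_ball_lt_top

lemma vol_ball_pos {r : ℝ} (hr : 0 < r) : 0 < volume (ball (0:RN N) r) :=
  measure_ball_pos volume _ hr

/-- Tail bound for integrals of shifted truncated Gaussians. -/
lemma tailbd (ht : 0 < t) {a c : ℝ} (ha : 1 ≤ a) (hc : 0 ≤ c) (x0 : RN N) (D : ℝ≥0∞) :
    ∫⁻ z : RN N, min D (ENNReal.ofReal (c * rexp (-(max (‖z - x0‖ - a) 0)^2 / (4*t)))) ≤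
      D * volume (ball (0:RN N) (2*a)) +
        ENNReal.ofReal (c * (π/(1/(16*t))) ^ ((N:ℝ)/2)) := by
  have hb : (0:ℝ) < 1/(16*t) := by positivity
  rw [← lintegral_add_compl
    (μ := volume)
    (f := fun z : RN N => min D (ENNReal.ofReal (c * rexp (-(max (‖z - x0‖ - a) 0)^2 / (4*t)))))
    (measurableSet_ball (x := x0) (ε := 2*a))]
  gcongr
  · calc ∫⁻ z in ball x0 (2*a), min D (ENNReal.ofReal (c * rexp (-(max (‖z - x0‖ - a) 0)^2 / (4*t))))
        ≤ ∫⁻ _ in ball x0 (2*a), D := lintegral_mono fun z => min_le_left _ _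
      _ = D * volume (ball x0 (2*a)) := by rw [setLIntegral_const]
      _ = D * volume (ball (0:RN N) (2*a)) := by rw [Measure.addHaar_ball_center]
  · calc ∫⁻ z in (ball x0 (2*a))ᶜ,
          min D (ENNReal.ofReal (c * rexp (-(max (‖z - x0‖ - a) 0)^2 / (4*t))))
        ≤ ∫⁻ z in (ball x0 (2*a))ᶜ, ENNReal.ofReal (c * rexp (-(1/(16*t)) * ‖z - x0‖^2)) := by
          apply setLIntegral_mono' (measurableSet_ball.compl)
          intro z hz
          refine le_trans (min_le_right _ _) (ENNReal.ofReal_le_ofReal ?_)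
          have hz2 : 2*a ≤ ‖z - x0‖ := by
            simpa [dist_eq_norm] using (mem_ball.not.mp hz)
          have hza : 0 ≤ ‖z - x0‖ - a := by linarith
          have hmax : max (‖z - x0‖ - a) 0 = ‖z - x0‖ - a := max_eq_left hza
          apply mul_le_mul_of_nonneg_left _ hc
          apply Real.exp_le_exp.mpr
          rw [hmax]
          rw [neg_div, neg_mul, neg_le_neg_iff]
          have h4 : ‖z - x0‖^2/4 ≤ (‖z - x0‖ - a)^2 := by
            nlinarith [mul_nonneg (sub_nonneg.mpr hz2)
              (by linarith : (0:ℝ) ≤ 3*‖z - x0‖ - 2*a)]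
          calc 1/(16*t) * ‖z - x0‖^2 = (‖z - x0‖^2/4)/(4*t) := by ring
            _ ≤ (‖z - x0‖ - a)^2/(4*t) :=
              (div_le_div_iff_of_pos_right (by positivity)).mpr h4
        _ ≤ ∫⁻ z : RN N, ENNReal.ofReal (c * rexp (-(1/(16*t)) * ‖z - x0‖^2)) :=
          setLIntegral_le_lintegral _ _
        _ = ENNReal.ofReal (c * (π/(1/(16*t))) ^ ((N:ℝ)/2)) := by
          rw [lintegral_sub_right_eq_self
            (fun w : RN N => ENNReal.ofReal (c * rexp (-(1/(16*t)) * ‖w‖^2))) x0]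
          exact lintegral_gauss hb hc

/-- Averaging over unit balls. -/
lemma avg (g : RN N → ℝ≥0∞) (hg : Measurable g) (κ : RN N → ℝ≥0∞)
    (hκ : ∀ z, ∫⁻ y in ball z 1, g y ≤ κ z) :
    volume (ball (0:RN N) 1) * ∫⁻ y, g y ≤ ∫⁻ z, κ z := by
  classical
  set W : RN N → RN N → ℝ≥0∞ := fun z y => if dist y z < 1 then 1 else 0 with hW
  have hS : MeasurableSet {p : RN N × RN N | dist p.2 p.1 < 1} :=
    (isOpen_lt (continuous_dist.comp (continuous_snd.prodMk continuous_fst))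
      continuous_const).measurableSet
  have hWmeas : Measurable (fun p : RN N × RN N => W p.1 p.2 * g p.2) := by
    exact (Measurable.ite hS measurable_const measurable_const).mul (hg.comp measurable_snd)
  have h1 : ∀ y, (∫⁻ z, W z y * g y ∂volume) = volume (ball (0:RN N) 1) * g y := by
    intro y
    have hWsym : ∀ z, W z y = (ball y 1).indicator (fun _ => 1) z := by
      intro z
      rw [Set.indicator_apply]
      simp only [hW, mem_ball]
      rw [dist_comm]
    calc (∫⁻ z, W z y * g y ∂volume)
        = (∫⁻ z, (ball y 1).indicator (fun _ => (1:ℝ≥0∞)) z) * g y := by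
          rw [← lintegral_mul_const _ (measurable_const.indicator measurableSet_ball)]
          simp_rw [hWsym]
      _ = volume (ball y 1) * g y := by
          rw [lintegral_indicator measurableSet_ball]
          simp
      _ = volume (ball (0:RN N) 1) * g y := by rw [Measure.addHaar_ball_center]
  have h2 : ∀ z, (∫⁻ y, W z y * g y ∂volume) = ∫⁻ y in ball z 1, g y := by
    intro z
    rw [← lintegral_indicator measurableSet_ball]
    congr 1 with y
    rw [Set.indicator_apply]
    by_cases hy : y ∈ ball z 1
    · simp [hW, hy, mem_ball.mp hy]
    · have : ¬ dist y z < 1 := fun h => hy (mem_ball.mpr h)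
      simp [hW, hy, this]
  calc volume (ball (0:RN N) 1) * ∫⁻ y, g y
      = ∫⁻ y, volume (ball (0:RN N) 1) * g y := (lintegral_const_mul _ hg).symm
    _ = ∫⁻ y, ∫⁻ z, W z y * g y ∂volume ∂volume := by simp_rw [h1]
    _ = ∫⁻ z, ∫⁻ y, W z y * g y ∂volume ∂volume := by
        rw [lintegral_lintegral_swap]
        exact (hWmeas.comp measurable_swap).aemeasurable
    _ = ∫⁻ z, ∫⁻ y in ball z 1, g y ∂volume := by simp_rw [h2]
    _ ≤ ∫⁻ z, κ z := lintegral_mono hκ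

lemma div_helper {a x y : ℝ≥0∞} (ha0 : a ≠ 0) (hat : a ≠ ∞) (h : a * x ≤ y) :
    x ≤ a⁻¹ * y := by
  calc x = (a⁻¹ * a) * x := by rw [ENNReal.inv_mul_cancel ha0 hat, one_mul]
    _ = a⁻¹ * (a * x) := mul_assoc _ _ _
    _ ≤ a⁻¹ * y := mul_le_mul_right h _

/-- Lemma A: the `L^∞` bound for the convolution with data in `L^1_uloc`. -/
lemma lemA (ht : 0 < t) (F : RN N → ℝ≥0∞) (hF : Measurable F) (M : ℝ≥0∞)
    (hM : ∀ z, ∫⁻ y in ball z 1, F y ≤ M) (x : RN N) :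
    ∫⁻ y, Ge N t (x - y) * F y ≤
      (volume (ball (0:RN N) 1))⁻¹ *
        ((ENNReal.ofReal ((4*π*t) ^ (-(N:ℝ)/2)) * volume (ball (0:RN N) 2) +
          ENNReal.ofReal ((4*π*t) ^ (-(N:ℝ)/2) * (π/(1/(16*t))) ^ ((N:ℝ)/2))) * M) := by
  set c0 : ℝ := (4*π*t) ^ (-(N:ℝ)/2) with hc0def
  have hc0 : 0 < c0 := Real.rpow_pos_of_pos (by positivity) _
  set κ : RN N → ℝ≥0∞ := fun z =>
    min (ENNReal.ofReal c0)
      (ENNReal.ofReal (c0 * rexp (-(max (‖z - x‖ - 1) 0)^2 / (4*t)))) * M with hκdef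
  have hg : Measurable (fun y => Ge N t (x - y) * F y) :=
    ((measurable_Ge N t).comp (measurable_const.sub measurable_id)).mul hF
  have hκ : ∀ z, ∫⁻ y in ball z 1, Ge N t (x - y) * F y ≤ κ z := by
    intro z
    have hptwise : ∀ y ∈ ball z 1, Ge N t (x - y) * F y ≤
        min (ENNReal.ofReal c0)
          (ENNReal.ofReal (c0 * rexp (-(max (‖z - x‖ - 1) 0)^2 / (4*t)))) * F y := by
      intro y hy
      apply mul_le_mul_left
      apply le_min
      · apply ENNReal.ofReal_le_ofReal
        unfold heatKernel
        calc (4*π*t) ^ (-(N:ℝ)/2) * rexp (-‖x-y‖ ^ 2 / (4 * t)) ≤ c0 * 1 := by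
              rw [hc0def]
              apply mul_le_mul_of_nonneg_left _ hc0.le
              apply Real.exp_le_one_iff.mpr
              have : (0:ℝ) ≤ ‖x - y‖^2 := sq_nonneg _
              have ht4 : (0:ℝ) < 4*t := by positivity
              apply div_nonpos_of_nonpos_of_nonneg (by linarith) ht4.le
          _ = c0 := mul_one _
      · apply ENNReal.ofReal_le_ofReal
        apply heatKernel_le ht
        have h1 : dist z x ≤ dist z y + dist y x := dist_triangle z y x
        have h2 : dist z y < 1 := mem_ball'.mp (mem_ball.mp hy) |> fun h => h
        rw [dist_eq_norm] at h1
        rw [dist_eq_norm] at h1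
        have : dist y x = ‖x - y‖ := by rw [dist_comm, dist_eq_norm]
        rw [this] at h1
        have h2' : ‖z - y‖ < 1 := by rwa [← dist_eq_norm]
        linarith
    calc ∫⁻ y in ball z 1, Ge N t (x - y) * F y
        ≤ ∫⁻ y in ball z 1,
            min (ENNReal.ofReal c0)
              (ENNReal.ofReal (c0 * rexp (-(max (‖z - x‖ - 1) 0)^2 / (4*t)))) * F y :=
          setLIntegral_mono' measurableSet_ball hptwise
      _ = min (ENNReal.ofReal c0)
            (ENNReal.ofReal (c0 * rexp (-(max (‖z - x‖ - 1) 0)^2 / (4*t)))) *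
            ∫⁻ y in ball z 1, F y := lintegral_const_mul _ hF
      _ ≤ κ z := mul_le_mul_right (hM z) _
  have havg := avg (fun y => Ge N t (x - y) * F y) hg κ hκ
  have hκmeas : Measurable (fun z : RN N =>
      min (ENNReal.ofReal c0)
        (ENNReal.ofReal (c0 * rexp (-(max (‖z - x‖ - 1) 0)^2 / (4*t))))) := by
    apply Measurable.min measurable_const
    apply Measurable.ennreal_ofReal
    apply Measurable.const_mul
    apply Measurable.exp
    apply Measurable.div_const
    apply Measurable.neg
    apply Measurable.pow_const
    exact ((measurable_id.sub measurable_const).norm.sub measurable_const).max measurable_const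
  have htail : (∫⁻ z, κ z) ≤
      (ENNReal.ofReal ((4*π*t) ^ (-(N:ℝ)/2)) * volume (ball (0:RN N) 2) +
        ENNReal.ofReal ((4*π*t) ^ (-(N:ℝ)/2) * (π/(1/(16*t))) ^ ((N:ℝ)/2))) * M := by
    have swap : ∀ z : RN N, ‖z - x‖ = ‖z - x‖ := fun _ => rfl
    calc ∫⁻ z, κ z
        = (∫⁻ z, min (ENNReal.ofReal c0)
            (ENNReal.ofReal (c0 * rexp (-(max (‖z - x‖ - 1) 0)^2 / (4*t))))) * M :=
          lintegral_mul_const _ hκmeas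
      _ ≤ (ENNReal.ofReal c0 * volume (ball (0:RN N) (2*1)) +
            ENNReal.ofReal (c0 * (π/(1/(16*t))) ^ ((N:ℝ)/2))) * M := by
          apply mul_le_mul_left
          exact tailbd ht le_rfl hc0.le x (ENNReal.ofReal c0)
      _ = (ENNReal.ofReal ((4*π*t) ^ (-(N:ℝ)/2)) * volume (ball (0:RN N) 2) +
            ENNReal.ofReal ((4*π*t) ^ (-(N:ℝ)/2) * (π/(1/(16*t))) ^ ((N:ℝ)/2))) * M := by
          norm_num [hc0def]
  exact div_helper (vol_ball_pos one_pos).ne' (vol_ball_lt_top 1).ne (havg.trans htail)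

/-- Lemma B: the `L^1_uloc` bound for the convolution with data in `L^1_uloc`. -/
lemma lemB (ht : 0 < t) (F : RN N → ℝ≥0∞) (hF : Measurable F) (M : ℝ≥0∞)
    (hM : ∀ z, ∫⁻ y in ball z 1, F y ≤ M) (x0 : RN N) :
    ∫⁻ x in ball x0 1, ∫⁻ y, Ge N t (x - y) * F y ∂volume ≤
      (volume (ball (0:RN N) 1))⁻¹ *
        ((volume (ball (0:RN N) 4) +
          ENNReal.ofReal (((volume (ball (0:RN N) 1)).toReal * (4*π*t) ^ (-(N:ℝ)/2)) *
            (π/(1/(16*t))) ^ ((N:ℝ)/2))) * M) := by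
  set c0 : ℝ := (4*π*t) ^ (-(N:ℝ)/2) with hc0def
  have hc0 : 0 < c0 := Real.rpow_pos_of_pos (by positivity) _
  set v1r : ℝ := (volume (ball (0:RN N) 1)).toReal with hv1rdef
  have hv1r : 0 < v1r := ENNReal.toReal_pos (vol_ball_pos one_pos).ne' (vol_ball_lt_top 1).ne
  have hv1e : ENNReal.ofReal v1r = volume (ball (0:RN N) 1) :=
    ENNReal.ofReal_toReal (vol_ball_lt_top 1).ne
  set Φ : RN N → ℝ≥0∞ := fun y => ∫⁻ x in ball x0 1, Ge N t (x - y) ∂volume with hΦdef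
  have hΦmeas : Measurable Φ := by
    apply Measurable.lintegral_prod_right (f := fun y x => Ge N t (x - y))
    exact (measurable_Ge N t).comp (measurable_snd.sub measurable_fst)
  have hGmeas : ∀ y : RN N, Measurable (fun x : RN N => Ge N t (x - y)) := fun y =>
    (measurable_Ge N t).comp (measurable_id.sub measurable_const)
  have hswap : ∫⁻ x in ball x0 1, ∫⁻ y, Ge N t (x - y) * F y ∂volume
      = ∫⁻ y, Φ y * F y ∂volume := by
    rw [lintegral_lintegral_swap]
    · congr 1 with y
      rw [hΦdef, ← lintegral_mul_const _ (hGmeas y)]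
    · apply Measurable.aemeasurable
      exact (((measurable_Ge N t).comp (measurable_fst.sub measurable_snd)).mul
        (hF.comp measurable_snd))
  have hΦ1 : ∀ y, Φ y ≤ 1 := by
    intro y
    calc Φ y ≤ ∫⁻ x, Ge N t (x - y) ∂volume := setLIntegral_le_lintegral _ _
      _ = 1 := by
          rw [lintegral_sub_right_eq_self (Ge N t) y]
          exact Ge_total ht
  have hΦ2 : ∀ z, ∀ y ∈ ball z 1, Φ y ≤
      ENNReal.ofReal ((v1r * c0) * rexp (-(max (‖z - x0‖ - 2) 0)^2 / (4*t))) := by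
    intro z y hy
    have hker : ∀ x ∈ ball x0 1, Ge N t (x - y) ≤
        ENNReal.ofReal (c0 * rexp (-(max (‖z - x0‖ - 2) 0)^2 / (4*t))) := by
      intro x hx
      apply ENNReal.ofReal_le_ofReal
      apply heatKernel_le ht
      have h1 : dist z x0 ≤ dist z y + dist y x + dist x x0 := dist_triangle4 z y x x0
      have h2 : dist z y < 1 := by rw [dist_comm]; exact mem_ball.mp hy
      have h3 : dist x x0 < 1 := mem_ball.mp hx
      have h4 : dist y x = ‖x - y‖ := by rw [dist_comm, dist_eq_norm]
      rw [h4, dist_eq_norm] at h1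
      linarith
    calc Φ y ≤ ∫⁻ _ in ball x0 1,
          ENNReal.ofReal (c0 * rexp (-(max (‖z - x0‖ - 2) 0)^2 / (4*t))) ∂volume :=
        setLIntegral_mono' measurableSet_ball hker
      _ = ENNReal.ofReal (c0 * rexp (-(max (‖z - x0‖ - 2) 0)^2 / (4*t))) *
            volume (ball x0 1) := setLIntegral_const _ _
      _ = ENNReal.ofReal ((v1r * c0) * rexp (-(max (‖z - x0‖ - 2) 0)^2 / (4*t))) := by
          rw [Measure.addHaar_ball_center, ← hv1e, ← ENNReal.ofReal_mul (by positivity)]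
          ring_nf
  set κ : RN N → ℝ≥0∞ := fun z =>
    min 1 (ENNReal.ofReal ((v1r * c0) * rexp (-(max (‖z - x0‖ - 2) 0)^2 / (4*t)))) * M
    with hκdef
  have hκ : ∀ z, ∫⁻ y in ball z 1, Φ y * F y ≤ κ z := by
    intro z
    calc ∫⁻ y in ball z 1, Φ y * F y
        ≤ ∫⁻ y in ball z 1,
            min 1 (ENNReal.ofReal ((v1r * c0) * rexp (-(max (‖z - x0‖ - 2) 0)^2 / (4*t)))) *
              F y := by
          apply setLIntegral_mono' measurableSet_ball
          intro y hy
          exact mul_le_mul_left (le_min (hΦ1 y) (hΦ2 z y hy)) _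
      _ = min 1 (ENNReal.ofReal ((v1r * c0) * rexp (-(max (‖z - x0‖ - 2) 0)^2 / (4*t)))) *
            ∫⁻ y in ball z 1, F y := lintegral_const_mul _ hF
      _ ≤ κ z := mul_le_mul_right (hM z) _
  have havg := avg (fun y => Φ y * F y) (hΦmeas.mul hF) κ hκ
  have hκmeas : Measurable (fun z : RN N =>
      min 1 (ENNReal.ofReal ((v1r * c0) * rexp (-(max (‖z - x0‖ - 2) 0)^2 / (4*t))))) := by
    apply Measurable.min measurable_const
    apply Measurable.ennreal_ofReal
    apply Measurable.const_mul
    apply Measurable.exp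
    apply Measurable.div_const
    apply Measurable.neg
    apply Measurable.pow_const
    exact ((measurable_id.sub measurable_const).norm.sub measurable_const).max measurable_const
  have htail : (∫⁻ z, κ z) ≤
      (volume (ball (0:RN N) 4) +
        ENNReal.ofReal ((v1r * c0) * (π/(1/(16*t))) ^ ((N:ℝ)/2))) * M := by
    calc ∫⁻ z, κ z
        = (∫⁻ z, min 1
            (ENNReal.ofReal ((v1r * c0) * rexp (-(max (‖z - x0‖ - 2) 0)^2 / (4*t))))) * M :=
          lintegral_mul_const _ hκmeas
      _ ≤ (1 * volume (ball (0:RN N) (2*2)) +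
            ENNReal.ofReal ((v1r * c0) * (π/(1/(16*t))) ^ ((N:ℝ)/2))) * M := by
          apply mul_le_mul_left
          exact tailbd ht one_le_two (by positivity) x0 1
      _ = (volume (ball (0:RN N) 4) +
            ENNReal.ofReal ((v1r * c0) * (π/(1/(16*t))) ^ ((N:ℝ)/2))) * M := by
          norm_num
  rw [hswap]
  exact div_helper (vol_ball_pos one_pos).ne' (vol_ball_lt_top 1).ne (havg.trans htail)

lemma pow_split {a b : ℝ≥0∞} (hab : a ≤ b) {s : ℝ} (hs : 1 ≤ s) :
    a ^ s ≤ b ^ (s-1) * a := by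
  rcases eq_or_ne a 0 with rfl | ha0
  · rw [ENNReal.zero_rpow_of_pos (by linarith)]
    exact zero_le
  rcases eq_or_ne a ⊤ with rfl | hatop
  · have hb : b = ⊤ := top_le_iff.mp hab
    subst hb
    have h1 : (1:ℝ≥0∞) ≤ ⊤ ^ (s-1) := by
      rcases eq_or_lt_of_le hs with h | h
      · simp [← h]
      · rw [ENNReal.top_rpow_of_pos (by linarith)]; exact le_top
    calc (⊤:ℝ≥0∞) ^ s = ⊤ := ENNReal.top_rpow_of_pos (by linarith)
      _ = 1 * ⊤ := (one_mul _).symm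
      _ ≤ ⊤ ^ (s-1) * ⊤ := mul_le_mul_left h1 _
  · calc a ^ s = a ^ ((s-1) + 1) := by ring_nf
      _ = a ^ (s-1) * a ^ (1:ℝ) := ENNReal.rpow_add _ _ ha0 hatop
      _ = a ^ (s-1) * a := by rw [ENNReal.rpow_one]
      _ ≤ b ^ (s-1) * a := by
          apply mul_le_mul_left
          exact ENNReal.rpow_le_rpow hab (by linarith)

/-- Jensen/Hölder: the convolution against the probability density `Ge` gets out of `L^q` powers. -/
lemma jensen (ht : 0 < t) {φ : RN N → ℝ≥0∞} (hφ : Measurable φ) {qr : ℝ} (hqr : 1 ≤ qr)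
    (x : RN N) :
    ∫⁻ y, Ge N t (x - y) * φ y ≤ (∫⁻ y, Ge N t (x - y) * φ y ^ qr) ^ (1/qr) := by
  rcases eq_or_lt_of_le hqr with h1 | h1
  · simp [← h1]
  have hconj : qr.HolderConjugate (Real.conjExponent qr) := Real.HolderConjugate.conjExponent h1
  set cj := Real.conjExponent qr with hcj
  have hGm : Measurable (fun y => Ge N t (x - y)) :=
    (measurable_Ge N t).comp (measurable_const.sub measurable_id)
  have key : ∀ y, Ge N t (x - y) * φ y =
      (Ge N t (x - y) ^ (1/qr) * φ y) * (Ge N t (x - y) ^ (1/cj)) := by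
    intro y
    rw [mul_comm (Ge N t (x - y) ^ (1/qr) * φ y), ← mul_assoc, ← ENNReal.rpow_add _ _
      (Ge_ne_zero ht _) (Ge_ne_top _)]
    rw [one_div, one_div, add_comm, hconj.inv_add_inv_eq_one, ENNReal.rpow_one]
  calc ∫⁻ y, Ge N t (x - y) * φ y
      = ∫⁻ y, (Ge N t (x - y) ^ (1/qr) * φ y) * (Ge N t (x - y) ^ (1/cj)) := by
        simp_rw [key]
    _ ≤ (∫⁻ y, (Ge N t (x - y) ^ (1/qr) * φ y) ^ qr) ^ (1/qr) *
          (∫⁻ y, (Ge N t (x - y) ^ (1/cj)) ^ cj) ^ (1/cj) := by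
        apply ENNReal.lintegral_mul_le_Lp_mul_Lq volume hconj
        · exact ((hGm.pow_const _).mul hφ).aemeasurable
        · exact (hGm.pow_const _).aemeasurable
    _ = (∫⁻ y, Ge N t (x - y) * φ y ^ qr) ^ (1/qr) * 1 := by
        congr 1
        · have : ∀ y : RN N, (Ge N t (x - y) ^ (1/qr) * φ y) ^ qr
              = Ge N t (x - y) * φ y ^ qr := by
            intro y
            rw [ENNReal.mul_rpow_of_nonneg _ _ (by positivity), ← ENNReal.rpow_mul,
              one_div, inv_mul_cancel₀ (by positivity : qr ≠ 0), ENNReal.rpow_one]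
          simp_rw [this]
        · have : ∀ y : RN N, (Ge N t (x - y) ^ (1/cj)) ^ cj = Ge N t (x - y) := by
            intro y
            rw [← ENNReal.rpow_mul, one_div, inv_mul_cancel₀ hconj.symm.pos.ne',
              ENNReal.rpow_one]
          simp_rw [this]
          rw [lintegral_Ge_sub ht x, ENNReal.one_rpow]
    _ = (∫⁻ y, Ge N t (x - y) * φ y ^ qr) ^ (1/qr) := mul_one _

lemma enorm_heatConv_le (ht : 0 < t) (f : RN N → ℝ) (x : RN N) :
    (‖heatConv N t f x‖₊ : ℝ≥0∞) ≤ ∫⁻ y, Ge N t (x - y) * (‖f y‖₊ : ℝ≥0∞) := by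
  unfold heatConv
  refine le_trans (enorm_integral_le_lintegral_enorm _) ?_
  apply lintegral_mono
  intro y
  dsimp only
  rw [enorm_mul, Real.enorm_eq_ofReal (heatKernel_pos ht _).le]
  exact le_rfl

lemma setLintegral_pow_le (f : RN N → ℝ) {q : ℝ≥0∞} (hq : 1 ≤ q) (hqt : q ≠ ∞) (z : RN N) :
    ∫⁻ y in ball z 1, (‖f y‖₊ : ℝ≥0∞) ^ q.toReal ≤ (ulocNorm N q f) ^ q.toReal := by
  have hq0 : q ≠ 0 := (zero_lt_one.trans_le hq).ne'
  have hqr : 0 < q.toReal := ENNReal.toReal_pos hq0 hqt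
  have heq := eLpNorm_eq_lintegral_rpow_enorm_toReal (f := f)
    (μ := volume.restrict (ball z 1)) hq0 hqt
  calc ∫⁻ y in ball z 1, (‖f y‖₊ : ℝ≥0∞) ^ q.toReal
      = (eLpNorm f q (volume.restrict (ball z 1))) ^ q.toReal := by
        rw [heq, ← ENNReal.rpow_mul, one_div, inv_mul_cancel₀ hqr.ne', ENNReal.rpow_one]; rfl
    _ ≤ (ulocNorm N q f) ^ q.toReal := by
        apply ENNReal.rpow_le_rpow _ hqr.le
        exact le_iSup (fun w => eLpNorm f q (volume.restrict (ball w 1))) z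

lemma ae_le_ulocTop (f : RN N → ℝ) :
    ∀ᵐ y : RN N, (‖f y‖₊ : ℝ≥0∞) ≤ ulocNorm N ∞ f := by
  obtain ⟨s, hsc, hsd⟩ := TopologicalSpace.exists_countable_dense (RN N)
  have h1 : ∀ v : RN N, ∀ᵐ y : RN N, y ∈ ball v 1 → (‖f y‖₊ : ℝ≥0∞) ≤ ulocNorm N ∞ f := by
    intro v
    have h2 : ∀ᵐ y ∂(volume.restrict (ball v 1)), (‖f y‖₊ : ℝ≥0∞) ≤ ulocNorm N ∞ f := by
      have h3 := ENNReal.ae_le_essSup (μ := volume.restrict (ball v 1))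
        (f := fun y => (‖f y‖₊ : ℝ≥0∞))
      refine h3.mono fun y hy => hy.trans ?_
      have h4 : essSup (fun y => (‖f y‖₊ : ℝ≥0∞)) (volume.restrict (ball v 1))
          = eLpNorm f ∞ (volume.restrict (ball v 1)) := by
        rw [eLpNorm_exponent_top, eLpNormEssSup]; rfl
      rw [h4]
      exact le_iSup (fun w => eLpNorm f ∞ (volume.restrict (ball w 1))) v
    exact (ae_restrict_iff' measurableSet_ball).mp h2
  have h4 : ∀ᵐ y : RN N, ∀ v ∈ s, y ∈ ball v 1 → (‖f y‖₊ : ℝ≥0∞) ≤ ulocNorm N ∞ f :=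
    (ae_ball_iff hsc).mpr fun v _ => h1 v
  refine h4.mono fun y hy => ?_
  obtain ⟨v, hvs, hv⟩ := hsd.exists_dist_lt y one_pos
  exact hy v hvs (mem_ball.mpr hv)

/-- The constant in the `L^∞` bound. -/
def aA (N : ℕ) : ℝ :=
  ((volume (ball (0:RN N) 2)).toReal * (4*π) ^ (-(N:ℝ)/2) + 4 ^ ((N:ℝ)/2)) /
    (volume (ball (0:RN N) 1)).toReal

/-- The constant in the `L^1` bound. -/
def bB (N : ℕ) : ℝ :=
  ((volume (ball (0:RN N) 4)).toReal +
    (volume (ball (0:RN N) 1)).toReal * 4 ^ ((N:ℝ)/2)) /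
    (volume (ball (0:RN N) 1)).toReal

lemma v1r_pos (N : ℕ) : 0 < (volume (ball (0:RN N) 1)).toReal :=
  ENNReal.toReal_pos (vol_ball_pos one_pos).ne' (vol_ball_lt_top 1).ne

lemma aA_pos (N : ℕ) : 0 < aA N := by
  unfold aA
  apply div_pos _ (v1r_pos N)
  have h1 : 0 ≤ (volume (ball (0:RN N) 2)).toReal := ENNReal.toReal_nonneg
  have h2 : (0:ℝ) < (4*π) ^ (-(N:ℝ)/2) := Real.rpow_pos_of_pos (by positivity) _
  have h3 : (0:ℝ) < 4 ^ ((N:ℝ)/2) := Real.rpow_pos_of_pos (by norm_num) _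
  positivity

lemma bB_pos (N : ℕ) : 0 < bB N := by
  unfold bB
  apply div_pos _ (v1r_pos N)
  have h1 : 0 ≤ (volume (ball (0:RN N) 4)).toReal := ENNReal.toReal_nonneg
  have h3 : (0:ℝ) < 4 ^ ((N:ℝ)/2) := Real.rpow_pos_of_pos (by norm_num) _
  have := (v1r_pos N)
  positivity

lemma c0G16 (ht : 0 < t) :
    (4*π*t) ^ (-(N:ℝ)/2) * (π/(1/(16*t))) ^ ((N:ℝ)/2) = (4:ℝ) ^ ((N:ℝ)/2) := by
  have h1 : π/(1/(16*t)) = (4*π*t) * 4 := by field_simp; ring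
  have h2 : ((4*π*t) * 4 : ℝ) ^ ((N:ℝ)/2) = (4*π*t)^((N:ℝ)/2) * 4^((N:ℝ)/2) :=
    Real.mul_rpow (by positivity) (by norm_num)
  rw [h1, h2, neg_div, Real.rpow_neg (by positivity), ← mul_assoc,
    inv_mul_cancel₀ (Real.rpow_pos_of_pos (by positivity) _).ne', one_mul]

/-- Lemma A with a clean constant. -/
lemma lemA' (ht : 0 < t) (F : RN N → ℝ≥0∞) (hF : Measurable F) (M : ℝ≥0∞)
    (hM : ∀ z, ∫⁻ y in ball z 1, F y ≤ M) (x : RN N) :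
    ∫⁻ y, Ge N t (x - y) * F y ≤
      (ENNReal.ofReal (aA N) * (1 + ENNReal.ofReal (t ^ (-(N:ℝ)/2)))) * M := by
  refine (lemA ht F hF M hM x).trans ?_
  rw [← mul_assoc]
  apply mul_le_mul_left
  set v1r : ℝ := (volume (ball (0:RN N) 1)).toReal with hv1rdef
  have hv1r : 0 < v1r := v1r_pos N
  have hv1e : volume (ball (0:RN N) 1) = ENNReal.ofReal v1r :=
    (ENNReal.ofReal_toReal (vol_ball_lt_top 1).ne).symm
  set v2r : ℝ := (volume (ball (0:RN N) 2)).toReal with hv2rdef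
  have hv2r : 0 ≤ v2r := ENNReal.toReal_nonneg
  have hv2e : volume (ball (0:RN N) 2) = ENNReal.ofReal v2r :=
    (ENNReal.ofReal_toReal measure_ball_lt_top.ne).symm
  have hc0 : (0:ℝ) < (4*π*t) ^ (-(N:ℝ)/2) := Real.rpow_pos_of_pos (by positivity) _
  have hu : (0:ℝ) < t ^ (-(N:ℝ)/2) := Real.rpow_pos_of_pos ht _
  have hP : (0:ℝ) < (4*π) ^ (-(N:ℝ)/2) := Real.rpow_pos_of_pos (by positivity) _
  have hQ : (0:ℝ) < 4 ^ ((N:ℝ)/2) := Real.rpow_pos_of_pos (by norm_num) _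
  have hsplit : (4*π*t) ^ (-(N:ℝ)/2) = (4*π) ^ (-(N:ℝ)/2) * t ^ (-(N:ℝ)/2) :=
    Real.mul_rpow (by positivity) ht.le
  calc (volume (ball (0:RN N) 1))⁻¹ *
        (ENNReal.ofReal ((4*π*t) ^ (-(N:ℝ)/2)) * volume (ball (0:RN N) 2) +
          ENNReal.ofReal ((4*π*t) ^ (-(N:ℝ)/2) * (π/(1/(16*t))) ^ ((N:ℝ)/2)))
      = ENNReal.ofReal (v1r⁻¹ * ((4*π*t) ^ (-(N:ℝ)/2) * v2r + 4 ^ ((N:ℝ)/2))) := by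
        rw [hv1e, hv2e, c0G16 ht, ← ENNReal.ofReal_mul hc0.le,
          ← ENNReal.ofReal_add (by positivity) hQ.le,
          ← ENNReal.ofReal_inv_of_pos hv1r, ← ENNReal.ofReal_mul (by positivity)]
    _ ≤ ENNReal.ofReal (aA N * (1 + t ^ (-(N:ℝ)/2))) := by
        apply ENNReal.ofReal_le_ofReal
        rw [hsplit]
        have key : (4*π) ^ (-(N:ℝ)/2) * t ^ (-(N:ℝ)/2) * v2r + 4 ^ ((N:ℝ)/2) ≤
            (v2r * (4*π) ^ (-(N:ℝ)/2) + 4 ^ ((N:ℝ)/2)) * (1 + t ^ (-(N:ℝ)/2)) := by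
          nlinarith [mul_nonneg (mul_nonneg hv2r hP.le) hu.le, mul_nonneg hQ.le hu.le]
        calc v1r⁻¹ * ((4*π) ^ (-(N:ℝ)/2) * t ^ (-(N:ℝ)/2) * v2r + 4 ^ ((N:ℝ)/2))
            ≤ v1r⁻¹ * ((v2r * (4*π) ^ (-(N:ℝ)/2) + 4 ^ ((N:ℝ)/2)) * (1 + t ^ (-(N:ℝ)/2))) :=
              mul_le_mul_of_nonneg_left key (by positivity)
          _ = aA N * (1 + t ^ (-(N:ℝ)/2)) := by
              unfold aA
              rw [← hv2rdef, ← hv1rdef]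
              field_simp
    _ = ENNReal.ofReal (aA N) * (1 + ENNReal.ofReal (t ^ (-(N:ℝ)/2))) := by
        rw [ENNReal.ofReal_mul (aA_pos N).le, ENNReal.ofReal_add one_pos.le hu.le,
          ENNReal.ofReal_one]

/-- Lemma B with a clean constant. -/
lemma lemB' (ht : 0 < t) (F : RN N → ℝ≥0∞) (hF : Measurable F) (M : ℝ≥0∞)
    (hM : ∀ z, ∫⁻ y in ball z 1, F y ≤ M) (x0 : RN N) :
    ∫⁻ x in ball x0 1, ∫⁻ y, Ge N t (x - y) * F y ∂volume ≤
      ENNReal.ofReal (bB N) * M := by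
  refine (lemB ht F hF M hM x0).trans ?_
  rw [← mul_assoc]
  apply mul_le_mul_left
  set v1r : ℝ := (volume (ball (0:RN N) 1)).toReal with hv1rdef
  have hv1r : 0 < v1r := v1r_pos N
  have hv1e : volume (ball (0:RN N) 1) = ENNReal.ofReal v1r :=
    (ENNReal.ofReal_toReal (vol_ball_lt_top 1).ne).symm
  set v4r : ℝ := (volume (ball (0:RN N) 4)).toReal with hv4rdef
  have hv4r : 0 ≤ v4r := ENNReal.toReal_nonneg
  have hv4e : volume (ball (0:RN N) 4) = ENNReal.ofReal v4r :=
    (ENNReal.ofReal_toReal measure_ball_lt_top.ne).symm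
  have hc0 : (0:ℝ) < (4*π*t) ^ (-(N:ℝ)/2) := Real.rpow_pos_of_pos (by positivity) _
  have hQ : (0:ℝ) < 4 ^ ((N:ℝ)/2) := Real.rpow_pos_of_pos (by norm_num) _
  calc (volume (ball (0:RN N) 1))⁻¹ *
        (volume (ball (0:RN N) 4) +
          ENNReal.ofReal ((v1r * (4*π*t) ^ (-(N:ℝ)/2)) * (π/(1/(16*t))) ^ ((N:ℝ)/2)))
      = ENNReal.ofReal (v1r⁻¹ * (v4r + v1r * 4 ^ ((N:ℝ)/2))) := by
        rw [hv1e, hv4e, mul_assoc v1r, c0G16 ht,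
          ← ENNReal.ofReal_add hv4r (by positivity),
          ← ENNReal.ofReal_inv_of_pos hv1r, ← ENNReal.ofReal_mul (by positivity)]
    _ = ENNReal.ofReal (bB N) := by
        unfold bB
        rw [← hv4rdef, ← hv1rdef]
        congr 1
        field_simp
    _ ≤ ENNReal.ofReal (bB N) := le_rfl

section Main

variable {q p : ℝ≥0∞}

/-- Bound for powers of the time-dependent constant. -/
lemma Xpow_le (ht : 0 < t) {θ : ℝ} (h0 : 0 ≤ θ) (h1 : θ ≤ 1) :
    (ENNReal.ofReal (aA N) * (1 + ENNReal.ofReal (t ^ (-(N:ℝ)/2)))) ^ θ ≤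
      ENNReal.ofReal ((aA N) ^ θ) * (1 + ENNReal.ofReal (t ^ ((-(N:ℝ)/2) * θ))) := by
  have hu : (0:ℝ) < t ^ (-(N:ℝ)/2) := Real.rpow_pos_of_pos ht _
  calc (ENNReal.ofReal (aA N) * (1 + ENNReal.ofReal (t ^ (-(N:ℝ)/2)))) ^ θ
      = (ENNReal.ofReal (aA N)) ^ θ * (1 + ENNReal.ofReal (t ^ (-(N:ℝ)/2))) ^ θ :=
        ENNReal.mul_rpow_of_nonneg _ _ h0
    _ ≤ ENNReal.ofReal ((aA N) ^ θ) *
          ((1:ℝ≥0∞) ^ θ + (ENNReal.ofReal (t ^ (-(N:ℝ)/2))) ^ θ) := by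
        apply mul_le_mul'
        · rw [ENNReal.ofReal_rpow_of_pos (aA_pos N)]
        · exact ENNReal.rpow_add_le_add_rpow _ _ h0 h1
    _ = ENNReal.ofReal ((aA N) ^ θ) * (1 + ENNReal.ofReal (t ^ ((-(N:ℝ)/2) * θ))) := by
        rw [ENNReal.one_rpow, ENNReal.ofReal_rpow_of_pos hu, ← Real.rpow_mul ht.le]

/-- The main estimate, `q ≠ ∞`, `p = ∞`. -/
lemma main_fin_top (hq : 1 ≤ q) (hqt : q ≠ ∞)
    (f : RN N → ℝ) (hf : Measurable f) (ht : 0 < t) :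
    ulocNorm N ∞ (heatConv N t f) ≤
      (ENNReal.ofReal ((aA N) ^ (1/q.toReal)) *
        (1 + ENNReal.ofReal (t ^ ((-(N:ℝ)/2) * (1/q.toReal))))) * ulocNorm N q f := by
  have hq0 : q ≠ 0 := (zero_lt_one.trans_le hq).ne'
  set qr := q.toReal with hqrdef
  have hqr1 : 1 ≤ qr := by
    rw [← ENNReal.toReal_one]
    exact ENNReal.toReal_mono hqt hq
  have hqrpos : 0 < qr := by linarith
  set F : RN N → ℝ≥0∞ := fun y => (‖f y‖₊ : ℝ≥0∞) ^ qr with hFdef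
  have hFm : Measurable F := hf.enorm.pow_const qr
  set Λ := ulocNorm N q f with hΛdef
  have hM : ∀ z, ∫⁻ y in ball z 1, F y ≤ Λ ^ qr := fun z => setLintegral_pow_le f hq hqt z
  set X := ENNReal.ofReal (aA N) * (1 + ENNReal.ofReal (t ^ (-(N:ℝ)/2))) with hXdef
  have hKA : ∀ x, ∫⁻ y, Ge N t (x - y) * F y ≤ X * Λ ^ qr :=
    fun x => lemA' ht F hFm _ hM x
  have hJ : ∀ x, (‖heatConv N t f x‖₊ : ℝ≥0∞) ≤ (∫⁻ y, Ge N t (x - y) * F y) ^ (1/qr) :=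
    fun x => (enorm_heatConv_le ht f x).trans (jensen ht hf.enorm hqr1 x)
  have hptwise : ∀ x, (‖heatConv N t f x‖₊ : ℝ≥0∞) ≤ X ^ (1/qr) * Λ := by
    intro x
    refine (hJ x).trans ?_
    calc (∫⁻ y, Ge N t (x - y) * F y) ^ (1/qr)
        ≤ (X * Λ ^ qr) ^ (1/qr) := ENNReal.rpow_le_rpow (hKA x) (by positivity)
      _ = X ^ (1/qr) * Λ := by
          rw [ENNReal.mul_rpow_of_nonneg _ _ (by positivity), ← ENNReal.rpow_mul,
            mul_one_div, div_self hqrpos.ne', ENNReal.rpow_one]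
  calc ulocNorm N ∞ (heatConv N t f) ≤ X ^ (1/qr) * Λ := by
        apply iSup_le
        intro z
        rw [eLpNorm_exponent_top, eLpNormEssSup]
        exact essSup_le_of_ae_le _ (Filter.Eventually.of_forall hptwise)
    _ ≤ (ENNReal.ofReal ((aA N) ^ (1/qr)) *
          (1 + ENNReal.ofReal (t ^ ((-(N:ℝ)/2) * (1/qr))))) * Λ := by
        apply mul_le_mul_left
        apply Xpow_le ht (by positivity)
        rw [div_le_one hqrpos]
        exact hqr1

/-- The main estimate, `q ≤ p` both finite. -/
lemma main_fin_fin (hq : 1 ≤ q) (hqp : q ≤ p) (hqt : q ≠ ∞) (hpt : p ≠ ∞)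
    (f : RN N → ℝ) (hf : Measurable f) (ht : 0 < t) :
    ulocNorm N p (heatConv N t f) ≤
      (ENNReal.ofReal ((aA N) ^ (1/q.toReal - 1/p.toReal) * (bB N) ^ (1/p.toReal)) *
        (1 + ENNReal.ofReal (t ^ ((-(N:ℝ)/2) * (1/q.toReal - 1/p.toReal))))) *
        ulocNorm N q f := by
  have hq0 : q ≠ 0 := (zero_lt_one.trans_le hq).ne'
  have hp0 : p ≠ 0 := (zero_lt_one.trans_le (hq.trans hqp)).ne'
  set qr := q.toReal with hqrdef
  set pr := p.toReal with hprdef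
  have hqr1 : 1 ≤ qr := by
    rw [← ENNReal.toReal_one]
    exact ENNReal.toReal_mono hqt hq
  have hpr1 : 1 ≤ pr := by
    rw [← ENNReal.toReal_one]
    exact ENNReal.toReal_mono hpt (hq.trans hqp)
  have hqrpos : 0 < qr := by linarith
  have hprpos : 0 < pr := by linarith
  have hqrpr : qr ≤ pr := ENNReal.toReal_mono hpt hqp
  set θ := 1/qr - 1/pr with hθdef
  have hθ0 : 0 ≤ θ := by
    rw [hθdef, sub_nonneg]
    exact one_div_le_one_div_of_le hqrpos hqrpr
  have hθ1 : θ ≤ 1 := by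
    have h1 : 1/qr ≤ 1 := by rw [div_le_one hqrpos]; exact hqr1
    have h2 : 0 < 1/pr := by positivity
    rw [hθdef]; linarith
  set s := pr/qr with hsdef
  have hs1 : 1 ≤ s := (one_le_div hqrpos).mpr hqrpr
  set F : RN N → ℝ≥0∞ := fun y => (‖f y‖₊ : ℝ≥0∞) ^ qr with hFdef
  have hFm : Measurable F := hf.enorm.pow_const qr
  set Λ := ulocNorm N q f with hΛdef
  set L := Λ ^ qr with hLdef
  have hM : ∀ z, ∫⁻ y in ball z 1, F y ≤ L := fun z => setLintegral_pow_le f hq hqt z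
  set X := ENNReal.ofReal (aA N) * (1 + ENNReal.ofReal (t ^ (-(N:ℝ)/2))) with hXdef
  set B := ENNReal.ofReal (bB N) with hBdef
  set K : RN N → ℝ≥0∞ := fun x => ∫⁻ y, Ge N t (x - y) * F y with hKdef
  have hKm : Measurable K := by
    apply Measurable.lintegral_prod_right (f := fun x y => Ge N t (x - y) * F y)
    exact ((measurable_Ge N t).comp (measurable_fst.sub measurable_snd)).mul
      (hFm.comp measurable_snd)
  have hKA : ∀ x, K x ≤ X * L := fun x => lemA' ht F hFm _ hM x
  have hKB : ∀ z0 : RN N, ∫⁻ x in ball z0 1, K x ≤ B * L :=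
    fun z0 => lemB' ht F hFm _ hM z0
  have hJ : ∀ x, (‖heatConv N t f x‖₊ : ℝ≥0∞) ≤ K x ^ (1/qr) :=
    fun x => (enorm_heatConv_le ht f x).trans (jensen ht hf.enorm hqr1 x)
  apply iSup_le
  intro z0
  have hθeq : (s - 1) * (1/pr) = θ := by
    rw [hsdef, hθdef]
    field_simp
  have hsum : qr * θ + qr * (1/pr) = 1 := by
    rw [hθdef]
    field_simp
    ring
  calc eLpNorm (heatConv N t f) p (volume.restrict (ball z0 1))
      = (∫⁻ x in ball z0 1, (‖heatConv N t f x‖₊ : ℝ≥0∞) ^ pr) ^ (1/pr) :=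
        eLpNorm_eq_lintegral_rpow_enorm_toReal hp0 hpt
    _ ≤ (∫⁻ x in ball z0 1, K x ^ s) ^ (1/pr) := by
        apply ENNReal.rpow_le_rpow _ (by positivity)
        apply lintegral_mono
        intro x
        calc (‖heatConv N t f x‖₊ : ℝ≥0∞) ^ pr
            ≤ (K x ^ (1/qr)) ^ pr := ENNReal.rpow_le_rpow (hJ x) (by positivity)
          _ = K x ^ s := by
              rw [← ENNReal.rpow_mul, one_div, inv_mul_eq_div]
    _ ≤ ((X * L) ^ (s - 1) * (B * L)) ^ (1/pr) := by
        apply ENNReal.rpow_le_rpow _ (by positivity)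
        calc ∫⁻ x in ball z0 1, K x ^ s
            ≤ ∫⁻ x in ball z0 1, (X * L) ^ (s - 1) * K x :=
              lintegral_mono fun x => pow_split (hKA x) hs1
          _ = (X * L) ^ (s - 1) * ∫⁻ x in ball z0 1, K x :=
              lintegral_const_mul _ hKm
          _ ≤ (X * L) ^ (s - 1) * (B * L) := mul_le_mul_right (hKB z0) _
    _ = (X ^ θ * B ^ (1/pr)) * (L ^ θ * L ^ (1/pr)) := by
        rw [ENNReal.mul_rpow_of_nonneg _ _ (by positivity : (0:ℝ) ≤ 1/pr),
          ← ENNReal.rpow_mul, hθeq,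
          ENNReal.mul_rpow_of_nonneg X L hθ0,
          ENNReal.mul_rpow_of_nonneg B L (by positivity : (0:ℝ) ≤ 1/pr)]
        ring
    _ = (X ^ θ * B ^ (1/pr)) * Λ := by
        congr 1
        rw [hLdef, ← ENNReal.rpow_mul, ← ENNReal.rpow_mul,
          ← ENNReal.rpow_add_of_nonneg _ _ (mul_nonneg hqrpos.le hθ0)
            (by positivity), hsum, ENNReal.rpow_one]
    _ ≤ (ENNReal.ofReal ((aA N) ^ θ * (bB N) ^ (1/pr)) *
          (1 + ENNReal.ofReal (t ^ ((-(N:ℝ)/2) * θ)))) * Λ := by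
        apply mul_le_mul_left
        have hB : B ^ (1/pr) = ENNReal.ofReal ((bB N) ^ (1/pr)) :=
          ENNReal.ofReal_rpow_of_pos (bB_pos N)
        calc X ^ θ * B ^ (1/pr)
            ≤ (ENNReal.ofReal ((aA N) ^ θ) *
                (1 + ENNReal.ofReal (t ^ ((-(N:ℝ)/2) * θ)))) *
                ENNReal.ofReal ((bB N) ^ (1/pr)) := by
              rw [hB]
              exact mul_le_mul_left (Xpow_le ht hθ0 hθ1) _
          _ = ENNReal.ofReal ((aA N) ^ θ * (bB N) ^ (1/pr)) *
                (1 + ENNReal.ofReal (t ^ ((-(N:ℝ)/2) * θ))) := by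
              rw [ENNReal.ofReal_mul (Real.rpow_nonneg (aA_pos N).le θ)]
              ring

end Main

end UlocProof

open UlocProof in
/-- `L^q_uloc → L^p_uloc` smoothing estimate for the heat semigroup
(Proposition 3.1, first estimate). -/
theorem uloc_smoothing
    (N : ℕ) (hN : 1 ≤ N) (q p : ℝ≥0∞) (hq : 1 ≤ q) (hqp : q ≤ p) :
    ∃ C : ℝ, 0 < C ∧
      ∀ f : RN N → ℝ, Measurable f → ulocNorm N q f < ∞ →
      ∀ t : ℝ, 0 < t →
        ulocNorm N p (heatConv N t f) ≤
          ENNReal.ofReal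
            (C * (1 + t ^ (-((N : ℝ) / 2 * ((1 / q).toReal - (1 / p).toReal))))) *
          ulocNorm N q f := by
  rcases eq_or_ne q ∞ with rfl | hqt
  · -- q = ∞, hence p = ∞
    have hp : p = ∞ := top_le_iff.mp hqp
    subst hp
    refine ⟨1, one_pos, ?_⟩
    intro f hf hΛ t ht
    have hae := ae_le_ulocTop (N := N) f
    have hptw : ∀ x, (‖heatConv N t f x‖₊ : ℝ≥0∞) ≤ ulocNorm N ∞ f := by
      intro x
      refine (enorm_heatConv_le ht f x).trans ?_
      calc ∫⁻ y, Ge N t (x - y) * (‖f y‖₊ : ℝ≥0∞)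
          ≤ ∫⁻ y, Ge N t (x - y) * ulocNorm N ∞ f :=
            lintegral_mono_ae (hae.mono fun y hy => mul_le_mul_right hy _)
        _ = (∫⁻ y, Ge N t (x - y)) * ulocNorm N ∞ f :=
            lintegral_mul_const _
              ((measurable_Ge N t).comp (measurable_const.sub measurable_id))
        _ = ulocNorm N ∞ f := by rw [lintegral_Ge_sub ht x, one_mul]
    have hbound : ulocNorm N ∞ (heatConv N t f) ≤ ulocNorm N ∞ f := by
      apply iSup_le
      intro z
      rw [eLpNorm_exponent_top, eLpNormEssSup]
      exact essSup_le_of_ae_le _ (Filter.Eventually.of_forall hptw)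
    refine hbound.trans ?_
    conv_lhs => rw [← one_mul (ulocNorm N ∞ f)]
    apply mul_le_mul_left
    have hexp : -((N : ℝ) / 2 * ((1 / (∞:ℝ≥0∞)).toReal - (1 / (∞:ℝ≥0∞)).toReal)) = 0 := by
      simp
    rw [hexp, Real.rpow_zero]
    exact ENNReal.one_le_ofReal.mpr (by norm_num)
  rcases eq_or_ne p ∞ with rfl | hpt
  · -- q finite, p = ∞
    set qr := q.toReal with hqrdef
    have hq0 : q ≠ 0 := (zero_lt_one.trans_le hq).ne'
    have hqr1 : 1 ≤ qr := by
      rw [← ENNReal.toReal_one]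
      exact ENNReal.toReal_mono hqt hq
    have hqrpos : 0 < qr := by linarith
    refine ⟨(aA N) ^ (1/qr), Real.rpow_pos_of_pos (aA_pos N) _, ?_⟩
    intro f hf hΛ t ht
    refine (main_fin_top hq hqt f hf ht).trans ?_
    apply mul_le_mul_left
    have hτ : -((N : ℝ) / 2 * ((1 / q).toReal - (1 / (∞:ℝ≥0∞)).toReal))
        = (-(N:ℝ)/2) * (1/qr) := by
      simp [one_div, ENNReal.toReal_inv]
      ring
    rw [hτ, ENNReal.ofReal_mul (Real.rpow_pos_of_pos (aA_pos N) _).le,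
      ENNReal.ofReal_add one_pos.le (Real.rpow_pos_of_pos ht _).le, ENNReal.ofReal_one]
  · -- q, p both finite
    set qr := q.toReal with hqrdef
    set pr := p.toReal with hprdef
    have hq0 : q ≠ 0 := (zero_lt_one.trans_le hq).ne'
    have hqr1 : 1 ≤ qr := by
      rw [← ENNReal.toReal_one]
      exact ENNReal.toReal_mono hqt hq
    have hpr1 : 1 ≤ pr := by
      rw [← ENNReal.toReal_one]
      exact ENNReal.toReal_mono hpt (hq.trans hqp)
    have hqrpos : 0 < qr := by linarith
    have hprpos : 0 < pr := by linarith
    set θ := 1/qr - 1/pr with hθdef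
    have hCpos : 0 < (aA N) ^ θ * (bB N) ^ (1/pr) :=
      mul_pos (Real.rpow_pos_of_pos (aA_pos N) _) (Real.rpow_pos_of_pos (bB_pos N) _)
    refine ⟨(aA N) ^ θ * (bB N) ^ (1/pr), hCpos, ?_⟩
    intro f hf hΛ t ht
    refine (main_fin_fin hq hqp hqt hpt f hf ht).trans ?_
    apply mul_le_mul_left
    have hτ : -((N : ℝ) / 2 * ((1 / q).toReal - (1 / p).toReal))
        = (-(N:ℝ)/2) * θ := by
      rw [hθdef]
      simp [one_div, ENNReal.toReal_inv]
      ring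
    rw [hτ, ENNReal.ofReal_mul hCpos.le,
      ENNReal.ofReal_add one_pos.le (Real.rpow_pos_of_pos ht _).le, ENNReal.ofReal_one]
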